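/- If G contains H as a weak immersion (H ≤_I G), then stcw(H) ≤ stcw(G) and tcw_0(H) ≤ tcw_0(G). -/

import Mathlib

open scoped Classical

noncomputable section

namespace PaperSTCW

open SimpleGraph Finset

/-- Degree of a vertex in a multiset of edges over `Sym2 W`, loops counting twice. -/
def mdeg {W : Type} (E : Multiset (Sym2 W)) (v : W) : ℕ :=
  (E.map fun e => if e = Sym2.diag v then 2 else if v ∈ e then 1 else 0).sum

/-- Remove the edges incident to `v` and, if `lift = true` and `v` was incident to exactly
two non-loop edges, add the lifted edge between their other endpoints
(this is the edge replacement performed when suppressing a degree-2 vertex). -/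
def nextE {W : Type} (lift : Bool) (v : W) (E : Multiset (Sym2 W)) : Multiset (Sym2 W) :=
  E.filter (fun e => v ∉ e) +
    (if lift then
      (match (E.filter (fun e => v ∈ e)).toList.map
          (fun e => if hm : v ∈ e then Sym2.Mem.other hm else v) with
        | [a, b] => ({s(a, b)} : Multiset (Sym2 W))
        | _ => 0)
     else 0)

/-- Exhaustively delete (and, when `lift = true`, suppress) vertices outside `X` of degree
at most `d` from the multigraph with vertex set `S` and edge multiset `E`;
returns the surviving vertex set. -/
def reduce {W : Type} (X : Finset W) (d : ℕ) (lift : Bool)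
    (S : Finset W) (E : Multiset (Sym2 W)) : Finset W :=
  if h : ∃ v, v ∈ S ∧ v ∉ X ∧ mdeg E v ≤ d then
    reduce X d lift (S.erase h.choose) (nextE lift h.choose E)
  else S
termination_by S.card
decreasing_by exact Finset.card_erase_lt_of_mem h.choose_spec.1

/-- A tree-cut decomposition of `G`: a rooted tree together with a near-partition of the
vertices of `G` into bags (each vertex lies in exactly one bag; bags may be empty). -/
structure TCD {V : Type} [Fintype V] (G : SimpleGraph V) where
  n : ℕ
  T : SimpleGraph (Fin n)
  tree : T.IsTree
  root : Fin n
  bag : Fin n → Finset V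
  partition : ∀ v : V, ∃! t, v ∈ bag t

variable {V : Type} [Fintype V] {G : SimpleGraph V}

/-- The set of nodes in the subtree rooted at `t` (those nodes all of whose walks
from the root pass through `t`). -/
def TCD.desc (D : TCD G) (t : Fin D.n) : Set (Fin D.n) :=
  {s | ∀ p : D.T.Walk D.root s, t ∈ p.support}

/-- The union of the bags of the subtree rooted at `t`. -/
def TCD.Y (D : TCD G) (t : Fin D.n) : Finset V :=
  Finset.univ.filter fun v => ∃ s, s ∈ D.desc t ∧ v ∈ D.bag s

/-- Adhesion of a node: the number of edges of `G` with exactly one endpoint in `Y t`. -/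
def TCD.adh (D : TCD G) (t : Fin D.n) : ℕ :=
  ((Finset.univ : Finset (Sym2 V)).filter fun e =>
    e ∈ G.edgeSet ∧ ∃ a b, e = s(a, b) ∧ a ∈ D.Y t ∧ b ∉ D.Y t).card

/-- The connected components of `T - t`. -/
def TCD.Cmp (D : TCD G) (t : Fin D.n) : Type :=
  (SimpleGraph.induce {s | s ≠ t} D.T).ConnectedComponent

instance (D : TCD G) (t : Fin D.n) : Fintype (D.Cmp t) := by
  unfold TCD.Cmp; infer_instance

/-- The consolidation map of the torso at `t`: vertices of the bag of `t` are kept,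
all vertices in the bags of a fixed connected component of `T - t` are consolidated
into a single vertex. -/
def TCD.toTorso (D : TCD G) (t : Fin D.n) (v : V) : V ⊕ D.Cmp t :=
  if h : ∃ s, s ≠ t ∧ v ∈ D.bag s then
    Sum.inr ((SimpleGraph.induce {s | s ≠ t} D.T).connectedComponentMk
      ⟨h.choose, h.choose_spec.1⟩)
  else Sum.inl v

/-- Vertex set of the torso at `t`. -/
def TCD.torsoS (D : TCD G) (t : Fin D.n) : Finset (V ⊕ D.Cmp t) :=
  ((D.bag t).image Sum.inl) ∪ (Finset.univ.image Sum.inr)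

/-- Edge multiset of the torso at `t` (consolidation keeps multiplicities and drops loops). -/
def TCD.torsoE (D : TCD G) (t : Fin D.n) : Multiset (Sym2 (V ⊕ D.Cmp t)) :=
  (((Finset.univ : Finset (Sym2 V)).filter fun e => e ∈ G.edgeSet).val.map
      (Sym2.map (D.toTorso t))).filter fun e => ¬ e.IsDiag

/-- Torso-size: the order of the 3-center of the torso at `t`, obtained by exhaustively
suppressing vertices outside the bag of degree at most 2. -/
def TCD.tor (D : TCD G) (t : Fin D.n) : ℕ :=
  (reduce ((D.bag t).image Sum.inl) 2 true (D.torsoS t) (D.torsoE t)).card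

/-- The order of the 2-center of the torso at `t`, obtained by exhaustively deleting
vertices outside the bag of degree at most 1. -/
def TCD.tor2 (D : TCD G) (t : Fin D.n) : ℕ :=
  (reduce ((D.bag t).image Sum.inl) 1 false (D.torsoS t) (D.torsoE t)).card

/-- The order of the 1-center of the torso at `t`, obtained by deleting isolated
vertices outside the bag. -/
def TCD.tor1 (D : TCD G) (t : Fin D.n) : ℕ :=
  (reduce ((D.bag t).image Sum.inl) 0 false (D.torsoS t) (D.torsoE t)).card

/-- Width of a tree-cut decomposition. -/
def TCD.width (D : TCD G) : ℕ := Finset.univ.sup fun t => max (D.adh t) (D.tor t)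

/-- Slim width of a tree-cut decomposition. -/
def TCD.slimWidth (D : TCD G) : ℕ := Finset.univ.sup fun t => max (D.adh t) (D.tor2 t)

/-- 0-width of a tree-cut decomposition. -/
def TCD.zeroWidth (D : TCD G) : ℕ := Finset.univ.sup fun t => max (D.adh t) (D.tor1 t)

/-- Tree-cut width. -/
def tcw {V : Type} [Fintype V] (G : SimpleGraph V) : ℕ :=
  sInf {k | ∃ D : TCD G, D.width ≤ k}

/-- Slim tree-cut width. -/
def stcw {V : Type} [Fintype V] (G : SimpleGraph V) : ℕ :=
  sInf {k | ∃ D : TCD G, D.slimWidth ≤ k}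

/-- 0-tree-cut width. -/
def tcw0 {V : Type} [Fintype V] (G : SimpleGraph V) : ℕ :=
  sInf {k | ∃ D : TCD G, D.zeroWidth ≤ k}


/-! ### Bundled finite graphs and weak immersions -/

structure FG where
  V : Type
  [fin : Fintype V]
  G : SimpleGraph V

attribute [instance] FG.fin

/-- One step of obtaining a graph from another: an isomorphic copy, deleting an edge,
deleting a vertex, or lifting a pair of incident edges `(x,y), (y,z)` (deleting them
and adding the edge `(x,z)`). `ImmStep B A` means `B` is obtained from `A`. -/
inductive ImmStep : FG → FG → Prop
  | iso (A B : FG) : (Nonempty (B.G ≃g A.G)) → ImmStep B A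
  | delEdge (A : FG) (e : Sym2 A.V) (he : e ∈ A.G.edgeSet) :
      ImmStep (FG.mk A.V (A.G.deleteEdges {e})) A
  | delVertex (A : FG) (v : A.V) :
      ImmStep (FG.mk {w : A.V // w ≠ v} (SimpleGraph.induce {w : A.V | w ≠ v} A.G)) A
  | lift (A : FG) (x y z : A.V) (hxy : A.G.Adj x y) (hyz : A.G.Adj y z) (hxz : x ≠ z) :
      ImmStep (FG.mk A.V (SimpleGraph.fromEdgeSet
        ((A.G.edgeSet \ {s(x, y), s(y, z)}) ∪ {s(x, z)}))) A

/-- `Immersion H G` : `G` contains `H` as a weak immersion, i.e. `H` can be obtained from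
`G` by a sequence of edge deletions, vertex deletions and liftings. -/
def Immersion (H G : FG) : Prop := Relation.ReflTransGen ImmStep H G

/-- `H` consists of `m` cycles intersecting in one vertex and otherwise pairwise
vertex-disjoint. -/
def IsFlower (m : ℕ) {W : Type} [Fintype W] (H : SimpleGraph W) : Prop :=
  H.Connected ∧ ∃ c : W, H.degree c = 2 * m ∧ ∀ v : W, v ≠ c → H.degree v = 2

/-- `H` consists of `m` paths with the same two endpoints which are otherwise pairwise
vertex-disjoint. -/
def IsTheta (m : ℕ) {W : Type} [Fintype W] (H : SimpleGraph W) : Prop :=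
  H.Connected ∧ ∃ x y : W, x ≠ y ∧ H.degree x = m ∧ H.degree y = m ∧
    (∀ v : W, v ≠ x → v ≠ y → H.degree v = 2) ∧
    (SimpleGraph.induce {v : W | v ≠ x} H).IsAcyclic ∧
    (SimpleGraph.induce {v : W | v ≠ y} H).IsAcyclic

/-- The star `K_{1,r}`. -/
def star (r : ℕ) : SimpleGraph (Fin 1 ⊕ Fin r) := completeBipartiteGraph (Fin 1) (Fin r)

/-- The windmill `W_r`: `r` triangles sharing one vertex, otherwise vertex-disjoint. -/
def windmill (r : ℕ) : SimpleGraph (Option (Fin r × Fin 2)) :=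
  SimpleGraph.fromRel (fun x y =>
    x = none ∨ ∃ (i : Fin r) (a b : Fin 2), x = some (i, a) ∧ y = some (i, b))

/-- `G` is the `k`-edge sum `G₁ ⊕ₖ G₂` at vertices `v₁, v₂` of degree `k`. -/
def IsEdgeSum {V₁ V₂ : Type} [Fintype V₁] [Fintype V₂] (k : ℕ)
    (G₁ : SimpleGraph V₁) (G₂ : SimpleGraph V₂) (v₁ : V₁) (v₂ : V₂)
    (G : SimpleGraph ({x : V₁ // x ≠ v₁} ⊕ {y : V₂ // y ≠ v₂})) : Prop :=
  G₁.degree v₁ = k ∧ G₂.degree v₂ = k ∧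
  ∃ π : V₁ → V₂, Set.BijOn π (G₁.neighborSet v₁) (G₂.neighborSet v₂) ∧
    (∀ a b : {x : V₁ // x ≠ v₁}, G.Adj (Sum.inl a) (Sum.inl b) ↔ G₁.Adj a b) ∧
    (∀ a b : {y : V₂ // y ≠ v₂}, G.Adj (Sum.inr a) (Sum.inr b) ↔ G₂.Adj a b) ∧
    (∀ (a : {x : V₁ // x ≠ v₁}) (b : {y : V₂ // y ≠ v₂}),
      G.Adj (Sum.inl a) (Sum.inr b) ↔ (G₁.Adj v₁ a ∧ π (a : V₁) = (b : V₂)))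

/-! ### Treewidth and maximum degree -/

/-- A tree decomposition of `G`. -/
structure TreeDecomp {V : Type} [Fintype V] (G : SimpleGraph V) where
  n : ℕ
  T : SimpleGraph (Fin n)
  tree : T.IsTree
  bag : Fin n → Finset V
  cover_v : ∀ v : V, ∃ t, v ∈ bag t
  cover_e : ∀ u v : V, G.Adj u v → ∃ t, u ∈ bag t ∧ v ∈ bag t
  coherent : ∀ v : V, (SimpleGraph.induce {t : Fin n | v ∈ bag t} T).Connected

/-- Width of a tree decomposition: maximum bag size minus one. -/
def TreeDecomp.width (D : TreeDecomp G) : ℕ :=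
  (Finset.univ.sup fun t => (D.bag t).card) - 1

/-- Treewidth. -/
def tw {V : Type} [Fintype V] (G : SimpleGraph V) : ℕ :=
  sInf {w | ∃ D : TreeDecomp G, D.width ≤ w}

/-- Maximum degree. -/
def maxDeg {V : Type} [Fintype V] (G : SimpleGraph V) : ℕ :=
  Finset.univ.sup fun v => G.degree v

/-! ### Edge-cut width, super edge-cut width, feedback edge number -/

/-- `T` is a maximal spanning forest of `G`. -/
def IsMSF {V : Type} (G T : SimpleGraph V) : Prop :=
  T ≤ G ∧ T.IsAcyclic ∧ ∀ u v : V, G.Adj u v → T.Reachable u v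

/-- The size of the local feedback edge set at `v`: edges of `G` outside `T` whose unique
`T`-path between their endpoints contains `v`. -/
def elocCard {V : Type} [Fintype V] (G T : SimpleGraph V) (v : V) : ℕ :=
  ((Finset.univ : Finset (Sym2 V)).filter fun e =>
    e ∈ G.edgeSet ∧ e ∉ T.edgeSet ∧
      ∃ a b : V, e = s(a, b) ∧ ∃ p : T.Walk a b, p.IsPath ∧ v ∈ p.support).card

/-- Edge-cut width of a pair `(G, T)`. -/
def ecwPair {V : Type} [Fintype V] (G T : SimpleGraph V) : ℕ :=
  1 + Finset.univ.sup fun v => elocCard G T v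

/-- Edge-cut width. -/
def ecw {V : Type} [Fintype V] (G : SimpleGraph V) : ℕ :=
  sInf {k | ∃ T : SimpleGraph V, IsMSF G T ∧ ecwPair G T ≤ k}

/-- Super edge-cut width: minimum edge-cut width over all supergraphs of `G`. -/
def secw {V : Type} [Fintype V] (G : SimpleGraph V) : ℕ :=
  sInf {k | ∃ (W : Type) (fW : Fintype W) (H : SimpleGraph W) (ι : V ↪ W),
    (∀ u v : V, G.Adj u v → H.Adj (ι u) (ι v)) ∧
    ∃ T : SimpleGraph W, IsMSF H T ∧ @ecwPair W fW H T ≤ k}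

/-- Feedback edge number: minimum number of edges whose deletion makes `G` a forest. -/
def fen {V : Type} [Fintype V] (G : SimpleGraph V) : ℕ :=
  sInf {m | ∃ F : Finset (Sym2 V), ↑F ⊆ G.edgeSet ∧ F.card = m ∧
    (G.deleteEdges ↑F).IsAcyclic}

/-! ### Nice decompositions -/

/-- The children of `t` in the rooted tree of `D`. -/
def TCD.children (D : TCD G) (t : Fin D.n) : Finset (Fin D.n) :=
  Finset.univ.filter fun s => D.T.Adj t s ∧ s ∈ D.desc t

/-- The neighborhood of a vertex set `S` in `G`. -/
def nbhd {V : Type} [Fintype V] (G : SimpleGraph V) (S : Finset V) : Finset V :=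
  Finset.univ.filter fun v => v ∉ S ∧ ∃ u ∈ S, G.Adj u v

/-- A non-root node is thin if its adhesion is at most 2. -/
def TCD.IsThin (D : TCD G) (t : Fin D.n) : Prop := t ≠ D.root ∧ D.adh t ≤ 2

/-- A tree-cut decomposition is nice if for every thin node `t`, `N(Y_t)` avoids the
sets `Y_b` of all siblings `b` of `t`. -/
def TCD.IsNice (D : TCD G) : Prop :=
  ∀ t : Fin D.n, D.IsThin t →
    ∀ p b : Fin D.n, t ∈ D.children p → b ∈ D.children p → b ≠ t →
      ∀ v ∈ nbhd G (D.Y t), v ∉ D.Y b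

/-- `B_t`: the thin children `b` of `t` with `|N(Y_b)| ≤ 2` and `N(Y_b) ⊆ X_t`. -/
def TCD.B (D : TCD G) (t : Fin D.n) : Finset (Fin D.n) :=
  (D.children t).filter fun b => (nbhd G (D.Y b)).card ≤ 2 ∧ nbhd G (D.Y b) ⊆ D.bag t

/-- `B_t^{(2)}`: the members of `B_t` of adhesion exactly 2. -/
def TCD.B2 (D : TCD G) (t : Fin D.n) : Finset (Fin D.n) :=
  (D.B t).filter fun b => D.adh b = 2

variable {W : Type}

lemma nextE_false (v : W) (E : Multiset (Sym2 W)) :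
    nextE false v E = E.filter (fun e => v ∉ e) := by
  simp [nextE]

lemma mdeg_add (E F : Multiset (Sym2 W)) (v : W) : mdeg (E + F) v = mdeg E v + mdeg F v := by
  simp [mdeg]

lemma mdeg_mono {E F : Multiset (Sym2 W)} (h : E ≤ F) (v : W) : mdeg E v ≤ mdeg F v := by
  obtain ⟨K, rfl⟩ := Multiset.le_iff_exists_add.1 h
  simp [mdeg_add]

lemma filter_le_filter_of_imp {α : Type*} (M : Multiset α) (p q : α → Prop)
    [DecidablePred p] [DecidablePred q] (h : ∀ x ∈ M, p x → q x) :
    M.filter p ≤ M.filter q := by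
  have : M.filter p = (M.filter q).filter p := by
    rw [Multiset.filter_filter]
    refine (Multiset.filter_congr ?_).symm
    intro x hx
    constructor
    · rintro ⟨hp, hq⟩; exact hp
    · intro hp; exact ⟨hp, h x hx hp⟩
  rw [this]
  exact Multiset.filter_le _ _

lemma reduce_subset (X : Finset W) (d : ℕ) (l : Bool) (S : Finset W) (E : Multiset (Sym2 W)) :
    reduce X d l S E ⊆ S := by
  rw [reduce]
  split
  · next h =>
    exact (reduce_subset X d l _ _).trans (Finset.erase_subset _ _)
  · exact subset_rfl
termination_by S.card
decreasing_by rename_i h; exact Finset.card_erase_lt_of_mem h.choose_spec.1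

theorem reduce_comm (X : Finset W) (d : ℕ) (S : Finset W) (E : Multiset (Sym2 W)) (v : W)
    (hv : v ∈ S) (hvX : v ∉ X) (hd : mdeg E v ≤ d) :
    reduce X d false S E = reduce X d false (S.erase v) (E.filter (fun e => v ∉ e)) := by
  have hex : ∃ w, w ∈ S ∧ w ∉ X ∧ mdeg E w ≤ d := ⟨v, hv, hvX, hd⟩
  rw [reduce, dif_pos hex, nextE_false]
  have hws := hex.choose_spec
  set w := hex.choose with hw
  by_cases hwv : w = v
  · rw [hwv]
  · have h1 : reduce X d false (S.erase w) (E.filter (fun e => w ∉ e)) =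
        reduce X d false ((S.erase w).erase v)
          ((E.filter (fun e => w ∉ e)).filter (fun e => v ∉ e)) :=
      reduce_comm X d (S.erase w) _ v (Finset.mem_erase.2 ⟨fun hh => hwv hh.symm, hv⟩) hvX
        ((mdeg_mono (Multiset.filter_le _ _) v).trans hd)
    have h2 : reduce X d false (S.erase v) (E.filter (fun e => v ∉ e)) =
        reduce X d false ((S.erase v).erase w)
          ((E.filter (fun e => v ∉ e)).filter (fun e => w ∉ e)) :=
      reduce_comm X d (S.erase v) _ w (Finset.mem_erase.2 ⟨hwv, hws.1⟩) hws.2.1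
        ((mdeg_mono (Multiset.filter_le _ _) w).trans hws.2.2)
    rw [h1, h2, Finset.erase_right_comm, Multiset.filter_filter, Multiset.filter_filter]
    congr 1
    exact Multiset.filter_congr (fun x _ => and_comm)
termination_by S.card
decreasing_by
  all_goals apply Finset.card_erase_lt_of_mem
  · exact hws.1
  · exact hv

theorem reduce_terminal (X : Finset W) (d : ℕ) (S : Finset W) (E : Multiset (Sym2 W)) :
    ∀ v ∈ reduce X d false S E, v ∉ X →
      ¬ mdeg (E.filter (fun e => ∀ u ∈ e, u ∈ reduce X d false S E ∨ u ∉ S)) v ≤ d := by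
  by_cases hex : ∃ v, v ∈ S ∧ v ∉ X ∧ mdeg E v ≤ d
  · rw [reduce, dif_pos hex, nextE_false]
    have hws := hex.choose_spec
    set w := hex.choose with hw
    intro v hv hvX
    have hsub : reduce X d false (S.erase w) (E.filter (fun e => w ∉ e)) ⊆ S.erase w :=
      reduce_subset _ _ _ _ _
    have key : E.filter (fun e => ∀ u ∈ e,
          u ∈ reduce X d false (S.erase w) (E.filter (fun e => w ∉ e)) ∨ u ∉ S) =
        (E.filter (fun e => w ∉ e)).filter (fun e => ∀ u ∈ e,
          u ∈ reduce X d false (S.erase w) (E.filter (fun e => w ∉ e)) ∨ u ∉ S.erase w) := by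
      rw [Multiset.filter_filter]
      apply Multiset.filter_congr
      intro e _
      constructor
      · intro h
        have hwe : w ∉ e := by
          intro hwin
          rcases h w hwin with hR | hS
          · exact (Finset.mem_erase.1 (hsub hR)).1 rfl
          · exact hS hws.1
        exact ⟨fun u hu => (h u hu).imp id (fun hns => fun hm => hns (Finset.mem_of_mem_erase hm)), hwe⟩
      · rintro ⟨h, hwe⟩ u hu
        refine (h u hu).imp id (fun hne hus => hne (Finset.mem_erase.2 ⟨?_, hus⟩))
        intro huw; exact hwe (huw ▸ hu)
    rw [key]
    exact reduce_terminal X d (S.erase w) _ v hv hvX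
  · rw [reduce, dif_neg hex]
    intro v hv hvX hm
    have heq : E.filter (fun e => ∀ u ∈ e, u ∈ S ∨ u ∉ S) = E :=
      Multiset.filter_eq_self.2 (fun e _ u _ => or_not)
    rw [heq] at hm
    exact hex ⟨v, hv, hvX, hm⟩
termination_by S.card
decreasing_by exact Finset.card_erase_lt_of_mem hws.1

lemma mdeg_map {W₁ W₂ : Type} {f : W₁ → W₂} (hf : Function.Injective f)
    (E : Multiset (Sym2 W₁)) (x : W₁) :
    mdeg (E.map (Sym2.map f)) (f x) = mdeg E x := by
  unfold mdeg
  rw [Multiset.map_map]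
  apply congrArg
  apply Multiset.map_congr rfl
  intro e _
  have h1 : Sym2.map f e = Sym2.diag (f x) ↔ e = Sym2.diag x := by
    have : Sym2.diag (f x) = Sym2.map f (Sym2.diag x) := by
      rw [Sym2.diag, Sym2.diag, Sym2.map_pair_eq]
    rw [this]
    exact ⟨fun h => Sym2.map.injective hf h, fun h => by rw [h]⟩
  have h2 : f x ∈ Sym2.map f e ↔ x ∈ e := by
    rw [Sym2.mem_map]
    exact ⟨fun ⟨a, ha, hfa⟩ => (hf hfa) ▸ ha, fun h => ⟨x, h, rfl⟩⟩
  simp only [Function.comp_apply, h1, h2]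

lemma map_filter_not_mem {W₁ W₂ : Type} {f : W₁ → W₂} (hf : Function.Injective f)
    (E : Multiset (Sym2 W₁)) (x : W₁) :
    (E.filter (fun e => x ∉ e)).map (Sym2.map f) =
      (E.map (Sym2.map f)).filter (fun e => f x ∉ e) := by
  induction E using Multiset.induction with
  | empty => simp
  | cons a s ih =>
    by_cases hxa : x ∈ a
    · have h : f x ∈ Sym2.map f a := Sym2.mem_map.2 ⟨x, hxa, rfl⟩
      simp [hxa, h, ih]
    · have h : f x ∉ Sym2.map f a := by
        rw [Sym2.mem_map]
        rintro ⟨u, hu, hfu⟩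
        exact hxa (hf hfu ▸ hu)
      simp [hxa, h, ih]

theorem reduce_card_mono {W₁ W₂ : Type} (f : W₁ → W₂) (hf : Function.Injective f) (d : ℕ)
    (X₁ : Finset W₁) (X₂ : Finset W₂) (hX : X₁.image f ⊆ X₂)
    (S₁ : Finset W₁) (S₂ : Finset W₂) (E₁ : Multiset (Sym2 W₁)) (E₂ : Multiset (Sym2 W₂))
    (hS : S₁.image f ⊆ S₂) (hE : E₁.map (Sym2.map f) ≤ E₂)
    (hend : ∀ e ∈ E₁, ∀ u ∈ e, u ∈ S₁) :
    (reduce X₁ d false S₁ E₁).card ≤ (reduce X₂ d false S₂ E₂).card := by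
  by_cases hex : ∃ v, v ∈ S₂ ∧ v ∉ X₂ ∧ mdeg E₂ v ≤ d
  · conv_rhs => rw [reduce]
    rw [dif_pos hex, nextE_false]
    have hws := hex.choose_spec
    by_cases hwim : ∃ x, x ∈ S₁ ∧ f x = hex.choose
    · obtain ⟨x, hxS, hfx⟩ := hwim
      rw [← hfx] at hws ⊢
      have hxX : x ∉ X₁ := fun hx => hws.2.1 (hX (Finset.mem_image_of_mem f hx))
      have hdx : mdeg E₁ x ≤ d := by
        rw [← mdeg_map hf]
        exact (mdeg_mono hE _).trans hws.2.2
      rw [reduce_comm X₁ d S₁ E₁ x hxS hxX hdx]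
      apply reduce_card_mono f hf d X₁ X₂ hX
      · intro y hy
        obtain ⟨z, hz, rfl⟩ := Finset.mem_image.1 hy
        rw [Finset.mem_erase] at hz ⊢
        exact ⟨fun h => hz.1 (hf h), hS (Finset.mem_image_of_mem f hz.2)⟩
      · rw [map_filter_not_mem hf]
        exact Multiset.filter_le_filter _ hE
      · intro e he u hu
        rw [Multiset.mem_filter] at he
        rw [Finset.mem_erase]
        exact ⟨fun h => he.2 (h ▸ hu), hend e he.1 u hu⟩
    · apply reduce_card_mono f hf d X₁ X₂ hX
      · intro y hy
        obtain ⟨z, hz, rfl⟩ := Finset.mem_image.1 hy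
        rw [Finset.mem_erase]
        exact ⟨fun h => hwim ⟨z, hz, h⟩, hS (Finset.mem_image_of_mem f hz)⟩
      · have : (E₁.map (Sym2.map f)).filter (fun e => hex.choose ∉ e) = E₁.map (Sym2.map f) := by
          rw [Multiset.filter_eq_self]
          intro e he hwe
          rw [Multiset.mem_map] at he
          obtain ⟨e₀, he₀, rfl⟩ := he
          rw [Sym2.mem_map] at hwe
          obtain ⟨u, hu, hfu⟩ := hwe
          exact hwim ⟨u, hend e₀ he₀ u hu, hfu⟩
        rw [← this]
        exact Multiset.filter_le_filter _ hE
      · exact hend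
  · conv_rhs => rw [reduce]
    rw [dif_neg hex]
    calc (reduce X₁ d false S₁ E₁).card ≤ S₁.card :=
          Finset.card_le_card (reduce_subset _ _ _ _ _)
      _ = (S₁.image f).card := (Finset.card_image_of_injective _ hf).symm
      _ ≤ S₂.card := Finset.card_le_card hS
termination_by S₂.card
decreasing_by
  · exact Finset.card_erase_lt_of_mem (by rw [hfx]; exact hws.1)
  · exact Finset.card_erase_lt_of_mem hex.choose_spec.1

lemma mdeg_singleton (e : Sym2 W) (v : W) :
    mdeg ({e} : Multiset (Sym2 W)) v = if e = Sym2.diag v then 2 else if v ∈ e then 1 else 0 := by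
  simp [mdeg]

lemma pair_ne_diag {u v x : W} (huv : u ≠ v) : s(u, v) ≠ Sym2.diag x := by
  rw [Sym2.diag]
  intro h
  rcases Sym2.eq_iff.1 h with ⟨h1, h2⟩ | ⟨h1, h2⟩ <;> exact huv (h1.trans h2.symm)

lemma mdeg_pair {u v x : W} (huv : u ≠ v) :
    mdeg ({s(u, v)} : Multiset (Sym2 W)) x = if x = u ∨ x = v then 1 else 0 := by
  rw [mdeg_singleton, if_neg (pair_ne_diag huv)]
  simp only [Sym2.mem_iff]

theorem reduce_lift_aux (X S : Finset W) (d : ℕ) (hd : d ≤ 1) (E₀ : Multiset (Sym2 W))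
    (a b c : W) (hab : a ≠ b) (hbc : b ≠ c) (hac : a ≠ c) (D : Finset W)
    (hDS : D ⊆ S)
    (hDR : ∀ u ∈ D, u ∉ reduce X d false S (E₀ + {s(a, c)}))
    (hinv : b ∈ D → a ∈ D ∨ c ∈ D) :
    reduce X d false S (E₀ + {s(a, c)}) ⊆
      reduce X d false (S \ D)
        ((E₀ + (s(a, b) ::ₘ {s(b, c)})).filter (fun e => ∀ u ∈ e, u ∉ D)) := by
  by_cases hex : ∃ v, v ∈ (S \ D) ∧ v ∉ X ∧
      mdeg ((E₀ + (s(a, b) ::ₘ {s(b, c)})).filter (fun e => ∀ u ∈ e, u ∉ D)) v ≤ d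
  · conv_rhs => rw [reduce]
    rw [dif_pos hex, nextE_false]
    have hws := hex.choose_spec
    revert hws
    generalize hex.choose = w
    intro hws
    have hwS : w ∈ S := (Finset.mem_sdiff.1 hws.1).1
    have hwD : w ∉ D := (Finset.mem_sdiff.1 hws.1).2
    -- split the degree bound
    have hsplit : mdeg ((E₀.filter (fun e => ∀ u ∈ e, u ∉ D))) w +
        mdeg (((s(a, b) ::ₘ {s(b, c)}).filter (fun e => ∀ u ∈ e, u ∉ D))) w ≤ d := by
      rw [← mdeg_add, ← Multiset.filter_add]
      exact hws.2.2
    -- w is not a survivor of the lifted reduction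
    have hwR : w ∉ reduce X d false S (E₀ + {s(a, c)}) := by
      intro hwR
      apply reduce_terminal X d S (E₀ + {s(a, c)}) w hwR hws.2.1
      rw [Multiset.filter_add, mdeg_add]
      have hE0 : mdeg (E₀.filter (fun e => ∀ u ∈ e,
          u ∈ reduce X d false S (E₀ + {s(a, c)}) ∨ u ∉ S)) w ≤
          mdeg (E₀.filter (fun e => ∀ u ∈ e, u ∉ D)) w := by
        apply mdeg_mono
        apply filter_le_filter_of_imp
        intro e _ hQ u hu
        rcases hQ u hu with hR | hS
        · intro huD; exact hDR u huD hR
        · intro huD; exact hS (hDS huD)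
      have hsp : mdeg (({s(a, c)} : Multiset (Sym2 W)).filter (fun e => ∀ u ∈ e,
          u ∈ reduce X d false S (E₀ + {s(a, c)}) ∨ u ∉ S)) w ≤
          mdeg ((s(a, b) ::ₘ {s(b, c)}).filter (fun e => ∀ u ∈ e, u ∉ D)) w := by
        rw [Multiset.filter_singleton]
        split
        · next hQ =>
          rw [mdeg_pair hac]
          split
          · next hwac =>
            -- w = a or w = c and the lifted edge survives
            rw [show (s(a, b) ::ₘ {s(b, c)} : Multiset (Sym2 W)) = {s(a, b)} + {s(b, c)} by
                rw [Multiset.singleton_add], Multiset.filter_add, mdeg_add]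
            by_cases hbD : b ∈ D
            · exfalso
              rcases hinv hbD with haD | hcD
              · rcases hwac with hwa | hwc
                · exact (hwa ▸ hwD) haD
                · rcases hQ a (Sym2.mem_iff.2 (Or.inl rfl)) with hR | hS
                  · exact hDR a haD hR
                  · exact hS (hDS haD)
              · rcases hwac with hwa | hwc
                · rcases hQ c (Sym2.mem_iff.2 (Or.inr rfl)) with hR | hS
                  · exact hDR c hcD hR
                  · exact hS (hDS hcD)
                · exact (hwc ▸ hwD) hcD
            · rcases hwac with hwa | hwc
              · rw [hwa] at hwD ⊢
                have hsurv : (∀ u ∈ s(a, b), u ∉ D) := by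
                  intro u hu
                  rcases Sym2.mem_iff.1 hu with rfl | rfl
                  · exact hwD
                  · exact hbD
                have h1 : mdeg (Multiset.filter (fun e => ∀ u ∈ e, u ∉ D)
                    ({s(a, b)} : Multiset (Sym2 W))) a = 1 := by
                  rw [Multiset.filter_singleton, if_pos hsurv, mdeg_pair hab,
                    if_pos (Or.inl rfl)]
                rw [h1]
                exact Nat.le_add_right 1 _
              · rw [hwc] at hwD ⊢
                have hsurv : (∀ u ∈ s(b, c), u ∉ D) := by
                  intro u hu
                  rcases Sym2.mem_iff.1 hu with rfl | rfl
                  · exact hbD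
                  · exact hwD
                have h2 : mdeg (Multiset.filter (fun e => ∀ u ∈ e, u ∉ D)
                    ({s(b, c)} : Multiset (Sym2 W))) c = 1 := by
                  rw [Multiset.filter_singleton, if_pos hsurv, mdeg_pair hbc,
                    if_pos (Or.inr rfl)]
                rw [h2]
                exact Nat.le_add_left 1 _
          · next h => exact Nat.zero_le _
        · next h =>
          simp [mdeg]
      calc mdeg (E₀.filter (fun e => ∀ u ∈ e,
              u ∈ reduce X d false S (E₀ + {s(a, c)}) ∨ u ∉ S)) w +
            mdeg (({s(a, c)} : Multiset (Sym2 W)).filter (fun e => ∀ u ∈ e,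
              u ∈ reduce X d false S (E₀ + {s(a, c)}) ∨ u ∉ S)) w
          ≤ mdeg (E₀.filter (fun e => ∀ u ∈ e, u ∉ D)) w +
            mdeg ((s(a, b) ::ₘ {s(b, c)}).filter (fun e => ∀ u ∈ e, u ∉ D)) w :=
            Nat.add_le_add hE0 hsp
        _ ≤ d := hsplit
    -- maintain the invariant with D' = insert w D
    have hstate1 : (S \ D).erase w = S \ (insert w D) := by
      ext u
      simp only [Finset.mem_erase, Finset.mem_sdiff, Finset.mem_insert]
      tauto
    have hstate2 : ((E₀ + (s(a, b) ::ₘ {s(b, c)})).filter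
          (fun e => ∀ u ∈ e, u ∉ D)).filter (fun e => w ∉ e) =
        (E₀ + (s(a, b) ::ₘ {s(b, c)})).filter (fun e => ∀ u ∈ e, u ∉ insert w D) := by
      rw [Multiset.filter_filter]
      apply Multiset.filter_congr
      intro e _
      simp only [Finset.mem_insert]
      constructor
      · rintro ⟨hwe, hD⟩ u hu
        push_neg
        exact ⟨fun h => hwe (h ▸ hu), hD u hu⟩
      · intro h
        constructor
        · intro hwe
          exact (h w hwe) (Or.inl rfl)
        · intro u hu huD
          exact (h u hu) (Or.inr huD)
    rw [hstate1, hstate2]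
    apply reduce_lift_aux X S d hd E₀ a b c hab hbc hac (insert w D)
    · intro u hu
      rcases Finset.mem_insert.1 hu with rfl | huD
      · exact hwS
      · exact hDS huD
    · intro u hu
      rcases Finset.mem_insert.1 hu with rfl | huD
      · exact hwR
      · exact hDR u huD
    · intro hbD'
      rcases Finset.mem_insert.1 hbD' with rfl | hbD
      · -- b = w was just removed; its degree bound forces a ∈ D ∨ c ∈ D
        by_contra hcon
        push_neg at hcon
        have haD : b ∉ D := hwD
        have h2 : mdeg ((s(a, b) ::ₘ {s(b, c)}).filter (fun e => ∀ u ∈ e, u ∉ D)) b = 2 := by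
          rw [show (s(a, b) ::ₘ {s(b, c)} : Multiset (Sym2 W)) = {s(a, b)} + {s(b, c)} by
              rw [Multiset.singleton_add], Multiset.filter_add, mdeg_add,
            Multiset.filter_singleton, Multiset.filter_singleton]
          have hs1 : (∀ u ∈ s(a, b), u ∉ D) := by
            intro u hu
            rcases Sym2.mem_iff.1 hu with rfl | rfl
            · intro h
              exact hcon.1 (Finset.mem_insert.2 (Or.inr h))
            · exact haD
          have hs2 : (∀ u ∈ s(b, c), u ∉ D) := by
            intro u hu
            rcases Sym2.mem_iff.1 hu with rfl | rfl
            · exact haD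
            · intro h
              exact hcon.2 (Finset.mem_insert.2 (Or.inr h))
          rw [if_pos hs1, if_pos hs2, mdeg_pair hab, mdeg_pair hbc,
            if_pos (Or.inr rfl), if_pos (Or.inl rfl)]
        omega
      · rcases hinv hbD with h | h
        · exact Or.inl (Finset.mem_insert.2 (Or.inr h))
        · exact Or.inr (Finset.mem_insert.2 (Or.inr h))
  · conv_rhs => rw [reduce]
    rw [dif_neg hex]
    intro v hv
    rw [Finset.mem_sdiff]
    refine ⟨reduce_subset _ _ _ _ _ hv, fun hvD => hDR v hvD hv⟩
termination_by (S \ D).card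
decreasing_by
  rw [← hstate1]
  exact Finset.card_erase_lt_of_mem hws.1

theorem reduce_lift_le (X S : Finset W) (d : ℕ) (hd : d ≤ 1) (E₀ : Multiset (Sym2 W))
    (a b c : W) (hab : a ≠ b) (hbc : b ≠ c) (hac : a ≠ c) :
    (reduce X d false S (E₀ + {s(a, c)})).card ≤
      (reduce X d false S (E₀ + (s(a, b) ::ₘ {s(b, c)}))).card := by
  have h := reduce_lift_aux X S d hd E₀ a b c hab hbc hac ∅
    (Finset.empty_subset _) (by simp) (by simp)
  rw [Finset.sdiff_empty] at h
  have heq : (E₀ + (s(a, b) ::ₘ {s(b, c)})).filter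
      (fun e => ∀ u ∈ e, u ∉ (∅ : Finset W)) = E₀ + (s(a, b) ::ₘ {s(b, c)}) := by
    apply Multiset.filter_eq_self.2
    intro e _ u _
    exact Finset.notMem_empty u
  rw [heq] at h
  exact Finset.card_le_card h


section TransferLayer

variable {V : Type} [Fintype V] {G : SimpleGraph V}

lemma TCD.mem_bag_self (D : TCD G) {t : Fin D.n} {v : V}
    (h : ¬∃ s, s ≠ t ∧ v ∈ D.bag s) : v ∈ D.bag t := by
  obtain ⟨s₀, hs₀, -⟩ := D.partition v
  by_cases hst : s₀ = t
  · exact hst ▸ hs₀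
  · exact absurd ⟨s₀, hst, hs₀⟩ h

lemma TCD.toTorso_mem_torsoS (D : TCD G) (t : Fin D.n) (v : V) :
    D.toTorso t v ∈ D.torsoS t := by
  unfold TCD.toTorso TCD.torsoS
  split
  · exact Finset.mem_union_right _ (Finset.mem_image_of_mem _ (Finset.mem_univ _))
  · next h =>
    exact Finset.mem_union_left _ (Finset.mem_image_of_mem _ (D.mem_bag_self h))

lemma TCD.torsoE_endpoints (D : TCD G) (t : Fin D.n) :
    ∀ e ∈ D.torsoE t, ∀ u ∈ e, u ∈ D.torsoS t := by
  intro e he u hu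
  unfold TCD.torsoE at he
  rw [Multiset.mem_filter] at he
  obtain ⟨e₀, -, rfl⟩ := Multiset.mem_map.1 he.1
  obtain ⟨v, -, rfl⟩ := Sym2.mem_map.1 hu
  exact D.toTorso_mem_torsoS t v

/-- Pull back a tree-cut decomposition along a map of vertex types. -/
def TCD.pullback {V' : Type} [Fintype V'] (D : TCD G) (H : SimpleGraph V') (φ : V' → V) :
    TCD H where
  n := D.n
  T := D.T
  tree := D.tree
  root := D.root
  bag := fun t => Finset.univ.filter (fun v => φ v ∈ D.bag t)
  partition := by
    intro v
    obtain ⟨t, ht, hu⟩ := D.partition (φ v)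
    refine ⟨t, by simp [ht], fun s hs => hu s ?_⟩
    simpa using hs

variable {V' : Type} [Fintype V'] {H : SimpleGraph V'} {φ : V' → V}

lemma pullback_bag_mem (D : TCD G) (t : Fin D.n) (v : V') :
    v ∈ (D.pullback H φ).bag t ↔ φ v ∈ D.bag t := by
  simp [TCD.pullback]

lemma pullback_Y_mem (D : TCD G) (t : Fin D.n) (v : V') :
    v ∈ (D.pullback H φ).Y t ↔ φ v ∈ D.Y t := by
  unfold TCD.Y
  simp only [Finset.mem_filter, Finset.mem_univ, true_and]
  constructor
  · rintro ⟨s, hs, hv⟩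
    exact ⟨s, hs, (pullback_bag_mem D s v).1 hv⟩
  · rintro ⟨s, hs, hv⟩
    exact ⟨s, hs, (pullback_bag_mem D s v).2 hv⟩

lemma pullback_adh_le (D : TCD G) (hφ : Function.Injective φ)
    (hedge : ∀ a b : V', H.Adj a b → G.Adj (φ a) (φ b)) (t : Fin D.n) :
    (D.pullback H φ).adh t ≤ D.adh t := by
  unfold TCD.adh
  apply Finset.card_le_card_of_injOn (Sym2.map φ)
  · intro e he
    have he := Finset.mem_filter.1 (Finset.mem_coe.1 he)
    obtain ⟨-, he1, a, b, rfl, hY, hnY⟩ := he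
    refine Finset.mem_coe.2 (Finset.mem_filter.2 ?_)
    refine ⟨Finset.mem_univ _, ?_, φ a, φ b, by rw [Sym2.map_pair_eq], ?_, ?_⟩
    · rw [Sym2.map_pair_eq, SimpleGraph.mem_edgeSet]
      exact hedge a b ((SimpleGraph.mem_edgeSet _).1 he1)
    · exact (pullback_Y_mem D t a).1 hY
    · exact fun hc => hnY ((pullback_Y_mem D t b).2 hc)
  · exact fun e _ e' _ hee => Sym2.map.injective hφ hee

lemma pullback_toTorso (D : TCD G) (t : Fin D.n) (v : V') :
    Sum.map φ (id : (D.pullback H φ).Cmp t → D.Cmp t) ((D.pullback H φ).toTorso t v) =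
      D.toTorso t (φ v) := by
  unfold TCD.toTorso
  split
  · next h1 =>
    have h2 : ∃ s, s ≠ t ∧ φ v ∈ D.bag s :=
      ⟨h1.choose, h1.choose_spec.1, (pullback_bag_mem D _ v).1 h1.choose_spec.2⟩
    rw [dif_pos h2]
    have hcc : h1.choose = h2.choose := by
      obtain ⟨s₀, hs₀, hu⟩ := D.partition (φ v)
      rw [hu _ ((pullback_bag_mem D _ v).1 h1.choose_spec.2), hu _ h2.choose_spec.2]
    show Sum.inr (id _) = _
    dsimp only [id]
    congr 1
    exact congrArg _ (Subtype.ext hcc)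
  · next h1 =>
    have h2 : ¬∃ s, s ≠ t ∧ φ v ∈ D.bag s := fun ⟨s, hs, hvs⟩ =>
      h1 ⟨s, hs, (pullback_bag_mem D _ v).2 hvs⟩
    rw [dif_neg h2]
    rfl

lemma map_filter_nondiag {α β : Type} {f : α → β} (hf : Function.Injective f)
    {i1 : DecidablePred (fun e : Sym2 α => ¬ e.IsDiag)}
    {i2 : DecidablePred (fun e : Sym2 β => ¬ e.IsDiag)}
    (M : Multiset (Sym2 α)) :
    (@Multiset.filter _ (fun e => ¬ e.IsDiag) i1 M).map (Sym2.map f) =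
      @Multiset.filter _ (fun e => ¬ e.IsDiag) i2 (M.map (Sym2.map f)) := by
  induction M using Multiset.induction with
  | empty => simp
  | cons a s ih =>
    by_cases hd : a.IsDiag
    · have hd' : (Sym2.map f a).IsDiag := (Sym2.isDiag_map hf).2 hd
      rw [Multiset.map_cons, Multiset.filter_cons, Multiset.filter_cons,
        if_neg (by simpa using hd), if_neg (by simpa using hd')]
      simpa using ih
    · have hd' : ¬ (Sym2.map f a).IsDiag := fun hc => hd ((Sym2.isDiag_map hf).1 hc)
      rw [Multiset.map_cons, Multiset.filter_cons, Multiset.filter_cons,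
        if_pos (by simpa using hd), if_pos (by simpa using hd')]
      rw [Multiset.singleton_add, Multiset.singleton_add, Multiset.map_cons, ih]

lemma filter_map_le_filter_map {α β : Type} {f : α → β}
    (hf : Function.Injective f)
    {i1 : DecidablePred (fun e : Sym2 α => ¬ e.IsDiag)}
    {i2 : DecidablePred (fun e : Sym2 β => ¬ e.IsDiag)}
    {M : Multiset (Sym2 α)} {N : Multiset (Sym2 β)}
    (h : M.map (Sym2.map f) ≤ N) :
    (@Multiset.filter _ (fun e => ¬ e.IsDiag) i1 M).map (Sym2.map f) ≤
      @Multiset.filter _ (fun e => ¬ e.IsDiag) i2 N := by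
  have heq : (@Multiset.filter _ (fun e => ¬ e.IsDiag) i1 M).map (Sym2.map f) =
      @Multiset.filter _ (fun e => ¬ e.IsDiag) i2 (M.map (Sym2.map f)) :=
    map_filter_nondiag hf M
  rw [heq]
  exact Multiset.filter_le_filter _ h

lemma edge_map_mem (hedge : ∀ a b : V', H.Adj a b → G.Adj (φ a) (φ b))
    {e : Sym2 V'} (he : e ∈ H.edgeSet) : Sym2.map φ e ∈ G.edgeSet := by
  induction e with
  | _ a b =>
    rw [Sym2.map_pair_eq, SimpleGraph.mem_edgeSet]
    exact hedge a b ((SimpleGraph.mem_edgeSet _).1 he)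

lemma pullback_torsoE_le (D : TCD G) (hφ : Function.Injective φ)
    (hedge : ∀ a b : V', H.Adj a b → G.Adj (φ a) (φ b)) (t : Fin D.n) :
    ((D.pullback H φ).torsoE t).map
        (Sym2.map (Sum.map φ (id : (D.pullback H φ).Cmp t → D.Cmp t))) ≤
      D.torsoE t := by
  have hfinj : Function.Injective (Sum.map φ (id : (D.pullback H φ).Cmp t → D.Cmp t)) :=
    hφ.sumMap Function.injective_id
  unfold TCD.torsoE
  apply filter_map_le_filter_map hfinj
  have h1 : (((Finset.univ.filter (fun e => e ∈ H.edgeSet)).val.map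
          (Sym2.map ((D.pullback H φ).toTorso t))).map
        (Sym2.map (Sum.map φ (id : (D.pullback H φ).Cmp t → D.Cmp t)))) =
      (((Finset.univ.filter (fun e => e ∈ H.edgeSet)).val.map (Sym2.map φ)).map
        (Sym2.map (D.toTorso t))) := by
    rw [Multiset.map_map, Multiset.map_map]
    apply Multiset.map_congr rfl
    intro e _
    simp only [Function.comp_apply]
    rw [Sym2.map_map, Sym2.map_map]
    apply congrFun
    apply congrArg
    funext v
    exact pullback_toTorso D t v
  rw [h1]
  apply Multiset.map_le_map
  rw [Multiset.le_iff_subset ((Finset.nodup _).map (Sym2.map.injective hφ))]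
  intro e he
  obtain ⟨e₀, he₀, rfl⟩ := Multiset.mem_map.1 he
  rw [← Finset.mem_def, Finset.mem_filter] at he₀ ⊢
  exact ⟨Finset.mem_univ _, edge_map_mem hedge he₀.2⟩

lemma pullback_reduce_le (D : TCD G) (hφ : Function.Injective φ)
    (hedge : ∀ a b : V', H.Adj a b → G.Adj (φ a) (φ b)) (t : Fin D.n) (d : ℕ) :
    (reduce (((D.pullback H φ).bag t).image Sum.inl) d false
        ((D.pullback H φ).torsoS t) ((D.pullback H φ).torsoE t)).card ≤
      (reduce ((D.bag t).image Sum.inl) d false (D.torsoS t) (D.torsoE t)).card := by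
  apply reduce_card_mono (Sum.map φ (id : (D.pullback H φ).Cmp t → D.Cmp t))
    (hφ.sumMap Function.injective_id) d
  · intro u hu
    simp only [Finset.mem_image] at hu
    obtain ⟨w, ⟨v, hv, rfl⟩, rfl⟩ := hu
    exact Finset.mem_image.2 ⟨φ v, (pullback_bag_mem D t v).1 hv, rfl⟩
  · intro u hu
    simp only [Finset.mem_image] at hu
    obtain ⟨w, hw, rfl⟩ := hu
    unfold TCD.torsoS at hw ⊢
    rcases Finset.mem_union.1 hw with hw | hw
    · obtain ⟨v, hv, rfl⟩ := Finset.mem_image.1 hw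
      exact Finset.mem_union_left _ (Finset.mem_image.2 ⟨φ v, (pullback_bag_mem D t v).1 hv, rfl⟩)
    · obtain ⟨c, -, rfl⟩ := Finset.mem_image.1 hw
      exact Finset.mem_union_right _ (Finset.mem_image.2 ⟨c, Finset.mem_univ _, rfl⟩)
  · exact pullback_torsoE_le D hφ hedge t
  · exact TCD.torsoE_endpoints (D.pullback H φ) t

lemma pullback_slimWidth_le (D : TCD G) (hφ : Function.Injective φ)
    (hedge : ∀ a b : V', H.Adj a b → G.Adj (φ a) (φ b)) :
    (D.pullback H φ).slimWidth ≤ D.slimWidth := by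
  unfold TCD.slimWidth
  apply Finset.sup_le
  intro t _
  calc max ((D.pullback H φ).adh t) ((D.pullback H φ).tor2 t)
      ≤ max (D.adh t) (D.tor2 t) := by
        apply max_le_max (pullback_adh_le D hφ hedge t)
        unfold TCD.tor2
        exact pullback_reduce_le D hφ hedge t 1
    _ ≤ Finset.univ.sup (fun t => max (D.adh t) (D.tor2 t)) :=
        Finset.le_sup (f := fun s => max (D.adh s) (D.tor2 s)) (Finset.mem_univ t)

lemma pullback_zeroWidth_le (D : TCD G) (hφ : Function.Injective φ)
    (hedge : ∀ a b : V', H.Adj a b → G.Adj (φ a) (φ b)) :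
    (D.pullback H φ).zeroWidth ≤ D.zeroWidth := by
  unfold TCD.zeroWidth
  apply Finset.sup_le
  intro t _
  calc max ((D.pullback H φ).adh t) ((D.pullback H φ).tor1 t)
      ≤ max (D.adh t) (D.tor1 t) := by
        apply max_le_max (pullback_adh_le D hφ hedge t)
        unfold TCD.tor1
        exact pullback_reduce_le D hφ hedge t 0
    _ ≤ Finset.univ.sup (fun t => max (D.adh t) (D.tor1 t)) :=
        Finset.le_sup (f := fun s => max (D.adh s) (D.tor1 s)) (Finset.mem_univ t)

/-- The trivial one-node tree-cut decomposition. -/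
def trivTCD (G : SimpleGraph V) : TCD G where
  n := 1
  T := ⊥
  tree := by
    constructor
    · constructor
      intro u v
      have h : u = v := Subsingleton.elim u v
      subst h
      exact SimpleGraph.Reachable.refl u
    · exact SimpleGraph.isAcyclic_bot
  root := 0
  bag := fun _ => Finset.univ
  partition := fun v => ⟨0, Finset.mem_univ v, fun t _ => Subsingleton.elim t 0⟩

lemma stcw_mono_of_forall {V₁ V₂ : Type} [Fintype V₁] [Fintype V₂]
    {H : SimpleGraph V₁} {G : SimpleGraph V₂}
    (h : ∀ D : TCD G, ∃ D' : TCD H, D'.slimWidth ≤ D.slimWidth) : stcw H ≤ stcw G := by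
  have hmem : stcw G ∈ {k | ∃ D : TCD G, D.slimWidth ≤ k} :=
    Nat.sInf_mem ⟨(trivTCD G).slimWidth, trivTCD G, le_rfl⟩
  obtain ⟨D, hD⟩ := hmem
  obtain ⟨D', hD'⟩ := h D
  exact Nat.sInf_le ⟨D', hD'.trans hD⟩

lemma tcw0_mono_of_forall {V₁ V₂ : Type} [Fintype V₁] [Fintype V₂]
    {H : SimpleGraph V₁} {G : SimpleGraph V₂}
    (h : ∀ D : TCD G, ∃ D' : TCD H, D'.zeroWidth ≤ D.zeroWidth) : tcw0 H ≤ tcw0 G := by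
  have hmem : tcw0 G ∈ {k | ∃ D : TCD G, D.zeroWidth ≤ k} :=
    Nat.sInf_mem ⟨(trivTCD G).zeroWidth, trivTCD G, le_rfl⟩
  obtain ⟨D, hD⟩ := hmem
  obtain ⟨D', hD'⟩ := h D
  exact Nat.sInf_le ⟨D', hD'.trans hD⟩

end TransferLayer


section LiftCase

lemma filter_inst_congr {α : Type} {p : α → Prop} {i1 i2 : DecidablePred p}
    {M N : Multiset α} (h : M = N) :
    @Multiset.filter α p i1 M = @Multiset.filter α p i2 N := by
  subst h
  have : i1 = i2 := funext fun a => Subsingleton.elim _ _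
  rw [this]

lemma filter_nd_mono {α : Type} {p : α → Prop} {i1 i2 : DecidablePred p}
    {M N : Multiset α} (h : M ≤ N) :
    @Multiset.filter α p i1 M ≤ @Multiset.filter α p i2 N := by
  have : i1 = i2 := funext fun a => Subsingleton.elim _ _
  rw [this]
  exact Multiset.filter_le_filter _ h

lemma reduce_card_mono_id {W : Type} (d : ℕ) (X S : Finset W) {E₁ E₂ : Multiset (Sym2 W)}
    (hE : E₁ ≤ E₂) (hend : ∀ e ∈ E₁, ∀ u ∈ e, u ∈ S) :
    (reduce X d false S E₁).card ≤ (reduce X d false S E₂).card := by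
  apply reduce_card_mono id Function.injective_id d X X ?_ S S E₁ E₂ ?_ ?_ hend
  · intro u hu
    simp only [Finset.mem_image, id] at hu
    obtain ⟨v, hv, rfl⟩ := hu
    exact hv
  · intro u hu
    simp only [Finset.mem_image, id] at hu
    obtain ⟨v, hv, rfl⟩ := hu
    exact hv
  · rw [Sym2.map_id, Multiset.map_id]
    exact hE

lemma card_filter_lift_le {α : Type} [DecidableEq α] (SH SG : Finset α) (exy eyz exz : α)
    (hsub : ∀ e ∈ SH, e = exz ∨ (e ∈ SG ∧ e ≠ exy ∧ e ≠ eyz))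
    (hwit : exz ∈ SH → exy ∈ SG ∨ eyz ∈ SG) : SH.card ≤ SG.card := by
  by_cases hmem : exz ∈ SH
  · have hw' : ∃ w, w ∈ SG ∧ (w = exy ∨ w = eyz) := by
      rcases hwit hmem with h | h
      · exact ⟨exy, h, Or.inl rfl⟩
      · exact ⟨eyz, h, Or.inr rfl⟩
    obtain ⟨w, hwSG, hwor⟩ := hw'
    have h1 : SH ⊆ insert exz (SG.erase w) := by
      intro e he
      rcases hsub e he with rfl | ⟨heSG, h2, h3⟩
      · exact Finset.mem_insert_self _ _
      · refine Finset.mem_insert_of_mem (Finset.mem_erase.2 ⟨?_, heSG⟩)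
        rcases hwor with rfl | rfl
        · exact h2
        · exact h3
    calc SH.card ≤ (insert exz (SG.erase w)).card := Finset.card_le_card h1
      _ ≤ (SG.erase w).card + 1 := Finset.card_insert_le _ _
      _ = SG.card - 1 + 1 := by rw [Finset.card_erase_of_mem hwSG]
      _ ≤ SG.card := by
          have := Finset.card_pos.2 ⟨w, hwSG⟩
          omega
  · apply Finset.card_le_card
    intro e he
    rcases hsub e he with rfl | ⟨h, -⟩
    · exact absurd he hmem
    · exact h

variable {A : FG}

/-- Change the graph of a tree-cut decomposition (the fields do not depend on it). -/
def TCD.reindex (D : TCD A.G) (H : SimpleGraph A.V) : TCD H :=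
  ⟨D.n, D.T, D.tree, D.root, D.bag, D.partition⟩

lemma lift_edgeSet {x y z : A.V} (hxy : A.G.Adj x y) (hyz : A.G.Adj y z) (hxz : x ≠ z) :
    (SimpleGraph.fromEdgeSet ((A.G.edgeSet \ {s(x, y), s(y, z)}) ∪ {s(x, z)})).edgeSet =
      (A.G.edgeSet \ {s(x, y), s(y, z)}) ∪ {s(x, z)} := by
  rw [SimpleGraph.edgeSet_fromEdgeSet]
  ext e
  simp only [Set.mem_diff, Set.mem_union, Set.mem_insert_iff, Set.mem_singleton_iff,
    Set.mem_setOf_eq]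
  constructor
  · rintro ⟨h, -⟩
    exact h
  · intro h
    refine ⟨h, ?_⟩
    rcases h with ⟨he, -⟩ | rfl
    · exact A.G.not_isDiag_of_mem_edgeSet he
    · rw [Sym2.mem_diagSet, Sym2.mk_isDiag_iff]
      exact hxz

lemma lift_adh_le (D : TCD A.G) {x y z : A.V} (hxy : A.G.Adj x y) (hyz : A.G.Adj y z)
    (hxz : x ≠ z) (t : Fin D.n) :
    ((D.reindex (SimpleGraph.fromEdgeSet
        ((A.G.edgeSet \ {s(x, y), s(y, z)}) ∪ {s(x, z)}))).adh t) ≤ D.adh t := by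
  unfold TCD.adh
  apply card_filter_lift_le _ _ s(x, y) s(y, z) s(x, z)
  · intro e he
    have he := (@Finset.mem_filter _ _ (_) _ _).1 he
    obtain ⟨-, he1, hP⟩ := he
    rw [lift_edgeSet hxy hyz hxz] at he1
    rcases he1 with ⟨heG, hne⟩ | heq
    · right
      simp only [Set.mem_insert_iff, Set.mem_singleton_iff] at hne
      push_neg at hne
      exact ⟨Finset.mem_filter.2 ⟨Finset.mem_univ _, heG, hP⟩, hne.1, hne.2⟩
    · left
      exact heq
  · intro hmem
    have hmem := (@Finset.mem_filter _ _ (_) _ _).1 hmem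
    obtain ⟨-, -, a, b, hab, h1, h2⟩ := hmem
    have hor : (x ∈ D.Y t ∧ z ∉ D.Y t) ∨ (z ∈ D.Y t ∧ x ∉ D.Y t) := by
      rw [Sym2.eq_iff] at hab
      rcases hab with ⟨rfl, rfl⟩ | ⟨rfl, rfl⟩
      · exact Or.inl ⟨h1, h2⟩
      · exact Or.inr ⟨h1, h2⟩
    by_cases hy : y ∈ D.Y t
    · rcases hor with ⟨h1', h2'⟩ | ⟨h1', h2'⟩
      · right
        exact Finset.mem_filter.2 ⟨Finset.mem_univ _, (SimpleGraph.mem_edgeSet _).2 hyz,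
          y, z, rfl, hy, h2'⟩
      · left
        exact Finset.mem_filter.2 ⟨Finset.mem_univ _, (SimpleGraph.mem_edgeSet _).2 hxy,
          y, x, Sym2.eq_swap, hy, h2'⟩
    · rcases hor with ⟨h1', h2'⟩ | ⟨h1', h2'⟩
      · left
        exact Finset.mem_filter.2 ⟨Finset.mem_univ _, (SimpleGraph.mem_edgeSet _).2 hxy,
          x, y, rfl, h1', hy⟩
      · right
        exact Finset.mem_filter.2 ⟨Finset.mem_univ _, (SimpleGraph.mem_edgeSet _).2 hyz,
          z, y, Sym2.eq_swap, h1', hy⟩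

lemma lift_tor_core (D : TCD A.G) {x y z : A.V} (hxy : A.G.Adj x y) (hyz : A.G.Adj y z)
    (hxz : x ≠ z) (t : Fin D.n) (d : ℕ) (hd : d ≤ 1) :
    (reduce ((D.bag t).image Sum.inl) d false (D.torsoS t)
      (((Finset.univ.filter (fun e => e ∈ (SimpleGraph.fromEdgeSet
          ((A.G.edgeSet \ {s(x, y), s(y, z)}) ∪ {s(x, z)})).edgeSet)).val.map
        (Sym2.map (D.toTorso t))).filter (fun e => ¬ e.IsDiag))).card ≤
    (reduce ((D.bag t).image Sum.inl) d false (D.torsoS t)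
      (((Finset.univ.filter (fun e => e ∈ A.G.edgeSet)).val.map
        (Sym2.map (D.toTorso t))).filter (fun e => ¬ e.IsDiag))).card := by
  have hxyne : s(x, y) ≠ (s(y, z) : Sym2 A.V) := by
    intro h
    rw [Sym2.eq_iff] at h
    rcases h with ⟨h1, -⟩ | ⟨h1, -⟩
    · exact hxy.ne h1
    · exact hxz h1
  have hxzxy : s(x, z) ≠ (s(x, y) : Sym2 A.V) := by
    intro h
    rw [Sym2.eq_iff] at h
    rcases h with ⟨-, h2⟩ | ⟨h1, -⟩
    · exact hyz.ne h2.symm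
    · exact hxy.ne h1
  have hxzyz : s(x, z) ≠ (s(y, z) : Sym2 A.V) := by
    intro h
    rw [Sym2.eq_iff] at h
    rcases h with ⟨h1, -⟩ | ⟨h1, -⟩
    · exact hxy.ne h1
    · exact hxz h1
  set FG' : Finset (Sym2 A.V) := Finset.univ.filter (fun e => e ∈ A.G.edgeSet) with hFGdef
  have hm1 : s(x, y) ∈ FG' := Finset.mem_filter.2 ⟨Finset.mem_univ _, hxy⟩
  have hm2 : s(y, z) ∈ FG'.erase s(x, y) :=
    Finset.mem_erase.2 ⟨hxyne.symm, Finset.mem_filter.2 ⟨Finset.mem_univ _, hyz⟩⟩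
  set M₀ : Multiset (Sym2 A.V) := ((FG'.erase s(x, y)).erase s(y, z)).val with hM₀
  have hFG : FG'.val = s(x, y) ::ₘ s(y, z) ::ₘ M₀ := by
    rw [hM₀, Finset.erase_val, Finset.erase_val]
    rw [Multiset.cons_erase (by rw [← Finset.erase_val]; exact Finset.mem_def.1 hm2)]
    rw [Multiset.cons_erase (Finset.mem_def.1 hm1)]
  set FH : Finset (Sym2 A.V) := Finset.univ.filter (fun e => e ∈ (SimpleGraph.fromEdgeSet
      ((A.G.edgeSet \ {s(x, y), s(y, z)}) ∪ {s(x, z)})).edgeSet) with hFHdef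
  have hFH : FH = insert s(x, z) ((FG'.erase s(x, y)).erase s(y, z)) := by
    ext e
    rw [hFHdef, Finset.mem_filter, lift_edgeSet hxy hyz hxz]
    simp only [Finset.mem_univ, true_and, Set.mem_union, Set.mem_diff, Set.mem_insert_iff,
      Set.mem_singleton_iff, Finset.mem_insert, Finset.mem_erase, hFGdef, Finset.mem_filter]
    tauto
  by_cases hxzE : s(x, z) ∈ A.G.edgeSet
  · -- the lifted edge is already present: the new edge multiset is a sub-multiset
    apply reduce_card_mono_id
    · apply filter_nd_mono
      apply Multiset.map_le_map
      rw [Multiset.le_iff_subset (Finset.nodup _)]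
      intro e he
      rw [← Finset.mem_def, hFH] at he
      rcases Finset.mem_insert.1 he with rfl | he
      · exact Finset.mem_def.1 (Finset.mem_filter.2 ⟨Finset.mem_univ _, hxzE⟩)
      · exact Finset.mem_def.1 (Finset.mem_of_mem_erase (Finset.mem_of_mem_erase he))
    · intro e he u hu
      rw [Multiset.mem_filter] at he
      obtain ⟨e₀, -, rfl⟩ := Multiset.mem_map.1 he.1
      obtain ⟨v, -, rfl⟩ := Sym2.mem_map.1 hu
      exact D.toTorso_mem_torsoS t v
  · -- genuinely lift the edge
    have hxznotin : s(x, z) ∉ (FG'.erase s(x, y)).erase s(y, z) := by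
      intro h
      exact hxzE (Finset.mem_filter.1
        (Finset.mem_of_mem_erase (Finset.mem_of_mem_erase h))).2
    have hFHval : FH.val = s(x, z) ::ₘ M₀ := by
      rw [hFH, Finset.insert_val_of_notMem hxznotin, hM₀]
    rw [hFHval, hFG]
    rw [Multiset.map_cons, Multiset.map_cons, Multiset.map_cons, Sym2.map_pair_eq,
      Sym2.map_pair_eq, Sym2.map_pair_eq, Multiset.filter_cons, Multiset.filter_cons,
      Multiset.filter_cons]
    generalize hxb : D.toTorso t x = xb
    generalize hyb : D.toTorso t y = yb
    generalize hzb : D.toTorso t z = zb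
    set E₀ : Multiset (Sym2 (A.V ⊕ D.Cmp t)) :=
      (M₀.map (Sym2.map (D.toTorso t))).filter (fun e => ¬ e.IsDiag) with hE₀
    have hendE : ∀ e ∈ E₀, ∀ u ∈ e, u ∈ D.torsoS t := by
      intro e he u hu
      rw [hE₀, Multiset.mem_filter] at he
      obtain ⟨e₀, -, rfl⟩ := Multiset.mem_map.1 he.1
      obtain ⟨v, -, rfl⟩ := Sym2.mem_map.1 hu
      exact D.toTorso_mem_torsoS t v
    have hpair : ∀ (a b : A.V) (e : Sym2 (A.V ⊕ D.Cmp t)),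
        e = s(D.toTorso t a, D.toTorso t b) → ∀ u ∈ e, u ∈ D.torsoS t := by
      intro a b e heq u hu
      rw [heq, ← Sym2.map_pair_eq] at hu
      obtain ⟨v, -, rfl⟩ := Sym2.mem_map.1 hu
      exact D.toTorso_mem_torsoS t v
    have hone : ∀ (c : Sym2 (A.V ⊕ D.Cmp t)) {i : Decidable ¬c.IsDiag} (e : Sym2 _),
        e ∈ (if ¬c.IsDiag then ({c} : Multiset (Sym2 (A.V ⊕ D.Cmp t))) else 0) → e = c := by
      intro c i e he
      by_cases hc : ¬ c.IsDiag
      · rw [if_pos hc] at he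
        exact Multiset.mem_singleton.1 he
      · rw [if_neg hc] at he
        exact absurd he (Multiset.notMem_zero e)
    by_cases h3 : (s(xb, zb) : Sym2 (A.V ⊕ D.Cmp t)).IsDiag
    · -- lifted edge becomes a loop and disappears
      rw [if_neg (by simpa using h3), zero_add]
      apply reduce_card_mono_id
      · exact le_trans le_add_self le_add_self
      · exact hendE
    · rw [if_pos (by simpa using h3)]
      by_cases h1 : (s(xb, yb) : Sym2 (A.V ⊕ D.Cmp t)).IsDiag
      · -- xb = yb, so the two old edges contribute exactly the lifted edge
        have hxy' : xb = yb := Sym2.mk_isDiag_iff.1 h1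
        rw [if_neg (by simpa using h1), zero_add]
        have h2 : ¬ (s(yb, zb) : Sym2 (A.V ⊕ D.Cmp t)).IsDiag := by
          rw [Sym2.mk_isDiag_iff]
          rw [Sym2.mk_isDiag_iff, hxy'] at h3
          exact h3
        rw [if_pos (by simpa using h2)]
        apply reduce_card_mono_id
        · rw [hxy']
        · intro e he u hu
          rw [Multiset.mem_add] at he
          rcases he with he | he
          · have : e = s(xb, zb) := Multiset.mem_singleton.1 he
            exact hpair x z e (by rw [this, hxb, hzb]) u hu
          · exact hendE e he u hu
      · rw [if_pos (by simpa using h1)]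
        by_cases h2 : (s(yb, zb) : Sym2 (A.V ⊕ D.Cmp t)).IsDiag
        · -- yb = zb
          have hyz' : yb = zb := Sym2.mk_isDiag_iff.1 h2
          rw [if_neg (by simpa using h2), zero_add]
          apply reduce_card_mono_id
          · rw [hyz']
          · intro e he u hu
            rw [Multiset.mem_add] at he
            rcases he with he | he
            · have : e = s(xb, zb) := Multiset.mem_singleton.1 he
              exact hpair x z e (by rw [this, hxb, hzb]) u hu
            · exact hendE e he u hu
        · -- all three images distinct: a true lift
          rw [if_pos (by simpa using h2)]
          have hEG : ({s(xb, yb)} : Multiset (Sym2 (A.V ⊕ D.Cmp t))) + ({s(yb, zb)} + E₀) =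
              E₀ + (s(xb, yb) ::ₘ {s(yb, zb)}) := by
            rw [add_comm E₀ _, Multiset.cons_add, Multiset.singleton_add,
              Multiset.singleton_add]
          have hEH : ({s(xb, zb)} : Multiset (Sym2 (A.V ⊕ D.Cmp t))) + E₀ = E₀ + {s(xb, zb)} :=
            add_comm _ _
          rw [hEG, hEH]
          exact reduce_lift_le _ _ d hd E₀ xb yb zb (fun h => h1 (Sym2.mk_isDiag_iff.2 h))
            (fun h => h2 (Sym2.mk_isDiag_iff.2 h)) (fun h => h3 (Sym2.mk_isDiag_iff.2 h))

lemma lift_torso_eq (D : TCD A.G) (H : SimpleGraph A.V) (t : Fin D.n) :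
    (D.reindex H).torsoE t =
      ((Finset.univ.filter (fun e => e ∈ H.edgeSet)).val.map
        (Sym2.map (D.toTorso t))).filter (fun e => ¬ e.IsDiag) := by
  unfold TCD.torsoE
  exact filter_inst_congr rfl

lemma lift_slimWidth_le (D : TCD A.G) {x y z : A.V} (hxy : A.G.Adj x y) (hyz : A.G.Adj y z)
    (hxz : x ≠ z) :
    (D.reindex (SimpleGraph.fromEdgeSet
      ((A.G.edgeSet \ {s(x, y), s(y, z)}) ∪ {s(x, z)}))).slimWidth ≤ D.slimWidth := by
  unfold TCD.slimWidth
  apply Finset.sup_le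
  intro t _
  calc max ((D.reindex _).adh t) ((D.reindex _).tor2 t)
      ≤ max (D.adh t) (D.tor2 t) := by
        apply max_le_max (lift_adh_le D hxy hyz hxz t)
        unfold TCD.tor2
        erw [lift_torso_eq]
        have h2 : D.torsoE t = ((Finset.univ.filter (fun e => e ∈ A.G.edgeSet)).val.map
            (Sym2.map (D.toTorso t))).filter (fun e => ¬ e.IsDiag) := by
          unfold TCD.torsoE
          exact filter_inst_congr rfl
        rw [h2]
        refine le_of_eq_of_le ?_ (lift_tor_core D hxy hyz hxz t 1 (by norm_num))
        congr
    _ ≤ Finset.univ.sup (fun s => max (D.adh s) (D.tor2 s)) :=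
        Finset.le_sup (f := fun s => max (D.adh s) (D.tor2 s)) (Finset.mem_univ t)

lemma lift_zeroWidth_le (D : TCD A.G) {x y z : A.V} (hxy : A.G.Adj x y) (hyz : A.G.Adj y z)
    (hxz : x ≠ z) :
    (D.reindex (SimpleGraph.fromEdgeSet
      ((A.G.edgeSet \ {s(x, y), s(y, z)}) ∪ {s(x, z)}))).zeroWidth ≤ D.zeroWidth := by
  unfold TCD.zeroWidth
  apply Finset.sup_le
  intro t _
  calc max ((D.reindex _).adh t) ((D.reindex _).tor1 t)
      ≤ max (D.adh t) (D.tor1 t) := by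
        apply max_le_max (lift_adh_le D hxy hyz hxz t)
        unfold TCD.tor1
        erw [lift_torso_eq]
        have h2 : D.torsoE t = ((Finset.univ.filter (fun e => e ∈ A.G.edgeSet)).val.map
            (Sym2.map (D.toTorso t))).filter (fun e => ¬ e.IsDiag) := by
          unfold TCD.torsoE
          exact filter_inst_congr rfl
        rw [h2]
        refine le_of_eq_of_le ?_ (lift_tor_core D hxy hyz hxz t 0 (by norm_num))
        congr
    _ ≤ Finset.univ.sup (fun s => max (D.adh s) (D.tor1 s)) :=
        Finset.le_sup (f := fun s => max (D.adh s) (D.tor1 s)) (Finset.mem_univ t)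

end LiftCase

section Assembly

lemma immStep_width {B A : FG} (h : ImmStep B A) :
    ∀ D : TCD A.G, ∃ D' : TCD B.G, D'.slimWidth ≤ D.slimWidth ∧ D'.zeroWidth ≤ D.zeroWidth := by
  cases h with
  | iso A₀ B₀ hne =>
    intro D
    obtain ⟨e⟩ := hne
    refine ⟨D.pullback B.G (fun v => e v), ?_, ?_⟩
    · exact pullback_slimWidth_le D e.toEquiv.injective (fun a b hab => e.map_rel_iff.2 hab)
    · exact pullback_zeroWidth_le D e.toEquiv.injective (fun a b hab => e.map_rel_iff.2 hab)
  | delEdge A₀ e he =>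
    intro D
    refine ⟨D.pullback (A.G.deleteEdges {e}) id, ?_, ?_⟩
    · exact pullback_slimWidth_le D Function.injective_id
        (fun a b hab => (SimpleGraph.deleteEdges_adj.1 hab).1)
    · exact pullback_zeroWidth_le D Function.injective_id
        (fun a b hab => (SimpleGraph.deleteEdges_adj.1 hab).1)
  | delVertex A₀ v =>
    intro D
    refine ⟨D.pullback (SimpleGraph.induce {w : A.V | w ≠ v} A.G) Subtype.val, ?_, ?_⟩
    · exact pullback_slimWidth_le D Subtype.val_injective (fun a b hab => by simpa using hab)
    · exact pullback_zeroWidth_le D Subtype.val_injective (fun a b hab => by simpa using hab)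
  | lift A₀ x y z hxy hyz hxz =>
    intro D
    exact ⟨D.reindex _, lift_slimWidth_le D hxy hyz hxz, lift_zeroWidth_le D hxy hyz hxz⟩

lemma immStep_le {B A : FG} (h : ImmStep B A) :
    stcw B.G ≤ stcw A.G ∧ tcw0 B.G ≤ tcw0 A.G := by
  have hD := immStep_width h
  constructor
  · exact stcw_mono_of_forall (fun D => ⟨(hD D).choose, (hD D).choose_spec.1⟩)
  · exact tcw0_mono_of_forall (fun D => ⟨(hD D).choose, (hD D).choose_spec.2⟩)

end Assembly

end PaperSTCW

namespace PaperSTCW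
/-- if `G` contains `H` as a weak immersion then `stcw(H) ≤ stcw(G)` and
`tcw₀(H) ≤ tcw₀(G)`. -/
theorem stmt5 (H G : FG) (h : Immersion H G) :
    stcw H.G ≤ stcw G.G ∧ tcw0 H.G ≤ tcw0 G.G := by
  induction h with
  | refl => exact ⟨le_rfl, le_rfl⟩
  | tail h1 h2 ih =>
    exact ⟨ih.1.trans (immStep_le h2).1, ih.2.trans (immStep_le h2).2⟩
end PaperSTCW
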